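/- Let σ(s) = 1/(1 + e^{−s}), applied coordinatewise to vectors in ℝ^n, and let U, V ∈ ℝ^{n×n} be invertible matrices. If σ(V y) = U σ(y) for every y in a subset Y ⊆ ℝ^n with nonempty interior, then U = V and U is a permutation matrix. -/

import Mathlib

/-- The sigmoid function. -/
noncomputable def sig (s : ℝ) : ℝ := 1 / (1 + Real.exp (-s))

/-- A permutation matrix: a 0–1 matrix with exactly one 1 in each row and each column. -/
def IsPermMatrix {n : ℕ} (P : Matrix (Fin n) (Fin n) ℝ) : Prop :=
  (∀ i j, P i j = 0 ∨ P i j = 1) ∧ (∀ i, ∃! j, P i j = 1) ∧ (∀ j, ∃! i, P i j = 1)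

noncomputable def dsig (s : ℝ) : ℝ := sig s * (1 - sig s)

lemma one_add_exp_pos (s : ℝ) : 0 < 1 + Real.exp (-s) := by positivity

lemma sig_pos (s : ℝ) : 0 < sig s := by
  unfold sig; positivity

lemma sig_lt_one (s : ℝ) : sig s < 1 := by
  unfold sig
  rw [div_lt_one (one_add_exp_pos s)]
  linarith [Real.exp_pos (-s)]

lemma sig_strictMono : StrictMono sig := by
  intro a b hab
  unfold sig
  apply one_div_lt_one_div_of_lt (one_add_exp_pos b)
  have := Real.exp_lt_exp.2 (neg_lt_neg hab)
  linarith


lemma dsig_pos (s : ℝ) : 0 < dsig s :=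
  mul_pos (sig_pos s) (by linarith [sig_lt_one s])

lemma hasDerivAt_sig (s : ℝ) : HasDerivAt sig (dsig s) s := by
  have h1 : HasDerivAt (fun x : ℝ => 1 + Real.exp (-x)) (-Real.exp (-s)) s := by
    have := (Real.hasDerivAt_exp (-s)).comp s (hasDerivAt_neg s)
    exact (this.const_add 1).congr_deriv (by ring)
  have h2 : HasDerivAt (fun x : ℝ => (1 + Real.exp (-x))⁻¹)
      (-(-Real.exp (-s)) / (1 + Real.exp (-s))^2) s := h1.inv (by positivity)
  have he : sig = fun x : ℝ => (1 + Real.exp (-x))⁻¹ := by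
    funext x; simp [sig, one_div]
  rw [he]
  convert h2 using 1
  have hpos := one_add_exp_pos s
  rw [dsig, sig]
  field_simp
  ring

lemma dsig_eq_cases {u v : ℝ} (h : dsig u = dsig v) : u = v ∨ sig u + sig v = 1 := by
  have h' : (sig u - sig v) * (1 - (sig u + sig v)) = 0 := by
    unfold dsig at h; nlinarith [h]
  rcases mul_eq_zero.1 h' with h1 | h1
  · left; exact sig_strictMono.injective (by linarith)
  · right; linarith

lemma dsig_three {u v w : ℝ} (huv : u ≠ v) (huw : u ≠ w) (hvw : v ≠ w)
    (h1 : dsig u = dsig v) (h2 : dsig u = dsig w) : False := by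
  rcases dsig_eq_cases h1 with h | h
  · exact huv h
  rcases dsig_eq_cases h2 with h' | h'
  · exact huw h'
  exact hvw (sig_strictMono.injective (by linarith))

/-- Differentiating the functional identity. -/
lemma key_deriv {a b c d C ε : ℝ}
    (H : ∀ t, |t| < ε → sig (c + a * t) = b * sig (d + t) + C) :
    ∀ t, |t| < ε → a * dsig (c + a * t) = b * dsig (d + t) := by
  intro t ht
  have hf : HasDerivAt (fun t => sig (c + a * t)) (a * dsig (c + a * t)) t := by
    have hin : HasDerivAt (fun t : ℝ => c + a * t) a t := by
      exact (((hasDerivAt_id t).const_mul a).const_add c).congr_deriv (by ring)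
    exact ((hasDerivAt_sig (c + a * t)).comp t hin).congr_deriv (mul_comm _ _)
  have hg : HasDerivAt (fun t => b * sig (d + t) + C) (b * dsig (d + t)) t := by
    have hin : HasDerivAt (fun t : ℝ => d + t) 1 t := by
      exact (hasDerivAt_id t).const_add d
    have := ((hasDerivAt_sig (d + t)).comp t hin).const_mul b
    exact (this.add_const C).congr_deriv (by ring)
  have hmem : {t : ℝ | |t| < ε} ∈ nhds t := by
    have : IsOpen {t : ℝ | |t| < ε} := isOpen_lt (by fun_prop) continuous_const
    exact this.mem_nhds ht
  have heq : (fun t => sig (c + a * t)) =ᶠ[nhds t] (fun t => b * sig (d + t) + C) :=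
    Filter.eventuallyEq_of_mem hmem (fun x hx => H x hx)
  have hf' : HasDerivAt (fun t => b * sig (d + t) + C) (a * dsig (c + a * t)) t :=
    hf.congr_of_eventuallyEq heq.symm
  exact hf'.unique hg

lemma core_one {n : ℕ} (U V : Matrix (Fin n) (Fin n) ℝ) (y0 : Fin n → ℝ) (ε : ℝ)
    (hcore : ∀ z : Fin n → ℝ, ‖z‖ < ε → ∀ i,
      sig (V.mulVec y0 i + V.mulVec z i) = ∑ k, U i k * sig (y0 k + z k))
    (i j : Fin n) : ∀ t, |t| < ε →
      sig (V.mulVec y0 i + V i j * t)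
        = U i j * sig (y0 j + t) + ∑ k ∈ Finset.univ.erase j, U i k * sig (y0 k) := by
  intro t ht
  set z : Fin n → ℝ := fun m => if m = j then t else 0 with hz
  have hnorm : ‖z‖ < ε := by
    have h1 : ‖z‖ ≤ |t| := by
      apply (pi_norm_le_iff_of_nonneg (abs_nonneg t)).2
      intro k
      simp only [hz, Real.norm_eq_abs]
      split <;> simp [abs_nonneg]
    linarith [abs_lt.1 ht]
  have hmv : V.mulVec z i = V i j * t := by
    simp only [Matrix.mulVec, dotProduct, hz]
    rw [Finset.sum_eq_single j] <;> simp +contextual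
  have hmain := hcore z hnorm i
  rw [hmv] at hmain
  rw [hmain, ← Finset.add_sum_erase _ _ (Finset.mem_univ j)]
  congr 1
  · simp [hz]
  · exact Finset.sum_congr rfl fun k hk => by simp [hz, Finset.ne_of_mem_erase hk]

lemma core_two {n : ℕ} (U V : Matrix (Fin n) (Fin n) ℝ) (y0 : Fin n → ℝ) (ε : ℝ)
    (hcore : ∀ z : Fin n → ℝ, ‖z‖ < ε → ∀ i,
      sig (V.mulVec y0 i + V.mulVec z i) = ∑ k, U i k * sig (y0 k + z k))
    (i j k : Fin n) (hjk : j ≠ k) : ∀ s t, |s| < ε / 2 → |t| < ε / 2 →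
      sig ((V.mulVec y0 i + V i k * s) + V i j * t)
        = U i j * sig (y0 j + t) +
          (U i k * sig (y0 k + s) +
            ∑ m ∈ (Finset.univ.erase j).erase k, U i m * sig (y0 m)) := by
  intro s t hs ht
  set z : Fin n → ℝ := fun m => if m = j then t else if m = k then s else 0 with hz
  have hnorm : ‖z‖ < ε := by
    have h1 : ‖z‖ ≤ |t| + |s| := by
      apply (pi_norm_le_iff_of_nonneg (by positivity)).2
      intro m
      simp only [hz, Real.norm_eq_abs]
      split
      · linarith [abs_nonneg s]
      · split
        · linarith [abs_nonneg t]
        · simp [abs_nonneg]; positivity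
    linarith [abs_lt.1 ht, abs_lt.1 hs]
  have hmv : V.mulVec z i = V i j * t + V i k * s := by
    simp only [Matrix.mulVec, dotProduct, hz]
    have heq : ∀ m ∈ Finset.univ, V i m * (if m = j then t else if m = k then s else 0) =
        (if m = j then V i j * t else 0) + (if m = k then V i k * s else 0) := by
      intro m _
      by_cases h1 : m = j
      · subst h1; simp [hjk]
      · by_cases h2 : m = k
        · subst h2; simp [h1]
        · simp [h1, h2]
    rw [Finset.sum_congr rfl heq, Finset.sum_add_distrib]
    simp
  have hmain := hcore z hnorm i
  rw [hmv] at hmain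
  have harg : V.mulVec y0 i + V i k * s + V i j * t
      = V.mulVec y0 i + (V i j * t + V i k * s) := by ring
  rw [harg, hmain, ← Finset.add_sum_erase _ _ (Finset.mem_univ j)]
  have hkmem : k ∈ Finset.univ.erase j := Finset.mem_erase.2 ⟨Ne.symm hjk, Finset.mem_univ k⟩
  rw [← Finset.add_sum_erase _ _ hkmem]
  congr 1
  · simp [hz]
  congr 1
  · simp [hz, Ne.symm hjk]
  · apply Finset.sum_congr rfl
    intro m hm
    have hm1 : m ≠ k := Finset.ne_of_mem_erase hm
    have hm2 : m ≠ j := Finset.ne_of_mem_erase (Finset.mem_of_mem_erase hm)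
    simp [hz, hm1, hm2]

lemma scalar_step {a b d ε : ℝ} (hε : 0 < ε)
    (Hone : ∀ t, |t| < ε → sig (a * d + a * t) = b * sig (d + t))
    (Hd : ∀ t, |t| < ε → a * dsig (a * d + a * t) = b * dsig (d + t)) :
    a = 1 ∧ b = 1 := by
  have h00 : |(0:ℝ)| < ε := by simpa using hε
  have hb : 0 < b := by
    have h0 := Hone 0 h00
    nlinarith [sig_pos (a * d + a * 0), sig_pos (d + 0)]
  have lin : ∀ t, |t| < ε → a * (1 - b * sig (d + t)) = 1 - sig (d + t) := by
    intro t ht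
    have e1 := Hone t ht
    have e2 := Hd t ht
    unfold dsig at e2
    rw [e1] at e2
    have hst := sig_pos (d + t)
    have hbst : b * sig (d + t) ≠ 0 := by positivity
    have key : (b * sig (d + t)) * (a * (1 - b * sig (d + t)) - (1 - sig (d + t))) = 0 := by
      linear_combination e2
    rcases mul_eq_zero.1 key with h' | h'
    · exact absurd h' hbst
    · linarith
  have l0 := lin 0 h00
  have l1 := lin (ε / 2) (by rw [abs_of_pos (by linarith)]; linarith)
  have hne : sig (d + 0) ≠ sig (d + ε / 2) := by
    intro hh
    have := sig_strictMono.injective hh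
    linarith
  have hab : a * b = 1 := by
    have key2 : (sig (d + ε / 2) - sig (d + 0)) * (a * b - 1) = 0 := by
      linear_combination l0 - l1
    rcases mul_eq_zero.1 key2 with h' | h'
    · exact absurd (by linarith : sig (d + 0) = sig (d + ε / 2)) hne
    · linarith
  have ha1 : a = 1 := by linear_combination l0 + sig (d + 0) * hab
  exact ⟨ha1, by nlinarith⟩

/-- **Key identifiability step of Theorem 6.** If `U, V` are invertible and
`σ(V y) = U σ(y)` (sigmoid coordinatewise) for all `y` in a set with nonempty interior, then
`U = V` and `U` is a permutation matrix. -/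
theorem stmt_8 {n : ℕ} (U V : Matrix (Fin n) (Fin n) ℝ)
    (hU : IsUnit U.det) (hV : IsUnit V.det)
    (Y : Set (Fin n → ℝ)) (hY : (interior Y).Nonempty)
    (h : ∀ y ∈ Y, (fun i => sig (V.mulVec y i)) = U.mulVec (fun i => sig (y i))) :
    U = V ∧ IsPermMatrix U := by
  obtain ⟨y0, hy0⟩ := hY
  obtain ⟨ε, hε, hball⟩ := Metric.isOpen_iff.1 isOpen_interior y0 hy0
  have h00 : |(0:ℝ)| < ε := by simpa using hε
  -- core identity
  have hcore : ∀ z : Fin n → ℝ, ‖z‖ < ε → ∀ i,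
      sig (V.mulVec y0 i + V.mulVec z i) = ∑ k, U i k * sig (y0 k + z k) := by
    intro z hzn i
    have hmem : y0 + z ∈ Y := by
      apply interior_subset
      apply hball
      rw [Metric.mem_ball, dist_eq_norm]
      simpa using hzn
    have h1 := congrFun (h (y0 + z) hmem) i
    rw [Matrix.mulVec_add] at h1
    simpa [Matrix.mulVec, dotProduct] using h1
  -- first-derivative relation at t = 0
  have hone : ∀ i j, V i j * dsig (V.mulVec y0 i) = U i j * dsig (y0 j) := by
    intro i j
    have := key_deriv (core_one U V y0 ε hcore i j) 0 h00
    simpa using this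
  have hsupp : ∀ i j, V i j = 0 → U i j = 0 := by
    intro i j h0
    have h1 := hone i j
    rw [h0, zero_mul] at h1
    have := (dsig_pos (y0 j)).ne'
    exact (mul_eq_zero.1 h1.symm).resolve_right this
  -- each row has at most one nonzero entry
  have hrow2 : ∀ i j k, j ≠ k → V i j ≠ 0 → V i k = 0 := by
    intro i j k hjk hVij
    by_contra hVik
    have hkey : ∀ s, |s| < ε / 2 →
        V i j * dsig (V.mulVec y0 i + V i k * s) = U i j * dsig (y0 j) := by
      intro s hs
      have := key_deriv (fun t ht => core_two U V y0 ε hcore i j k hjk s t hs ht) 0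
        (by simpa using (by linarith : (0:ℝ) < ε / 2))
      simpa using this
    have hs0 : |(0:ℝ)| < ε / 2 := by simpa using (by linarith : (0:ℝ) < ε / 2)
    have hs1 : |ε / 4| < ε / 2 := by rw [abs_of_pos (by linarith)]; linarith
    have hs2 : |(-(ε / 4))| < ε / 2 := by rw [abs_neg, abs_of_pos (by linarith)]; linarith
    have e1 := hkey 0 hs0
    have e2 := hkey (ε / 4) hs1
    have e3 := hkey (-(ε / 4)) hs2
    set c := V.mulVec y0 i with hc
    have hne : V i k * (ε / 4) ≠ 0 := mul_ne_zero hVik (by positivity)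
    have d1 : dsig (c + V i k * 0) = dsig (c + V i k * (ε / 4)) :=
      mul_left_cancel₀ hVij (e1.trans e2.symm)
    have d2 : dsig (c + V i k * 0) = dsig (c + V i k * (-(ε / 4))) :=
      mul_left_cancel₀ hVij (e1.trans e3.symm)
    refine dsig_three ?_ ?_ ?_ d1 d2
    · intro hh
      apply hne
      have : V i k * 0 = V i k * (ε / 4) := by linarith [add_left_cancel hh]
      linarith [this]
    · intro hh
      apply hne
      have : V i k * 0 = V i k * (-(ε / 4)) := add_left_cancel hh
      rw [mul_zero, mul_neg] at this
      linarith
    · intro hh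
      apply hne
      have : V i k * (ε / 4) = V i k * (-(ε / 4)) := add_left_cancel hh
      rw [mul_neg] at this
      linarith
  -- each row and column of V is nonzero
  have hrowex : ∀ i, ∃ j, V i j ≠ 0 := by
    intro i
    by_contra hall
    push_neg at hall
    have h1 := Matrix.mul_nonsing_inv V hV
    have h2 := congrFun (congrFun h1 i) i
    simp [Matrix.mul_apply, hall, Matrix.one_apply] at h2
  have hcolex : ∀ j, ∃ i, V i j ≠ 0 := by
    intro j
    by_contra hall
    push_neg at hall
    have h1 := Matrix.nonsing_inv_mul V hV
    have h2 := congrFun (congrFun h1 j) j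
    simp [Matrix.mul_apply, hall, Matrix.one_apply] at h2
  choose r hr using hrowex
  have hruniq : ∀ i j, V i j ≠ 0 → j = r i := by
    intro i j hj
    by_contra hne
    exact hj (hrow2 i (r i) j (fun hh => hne hh.symm) (hr i))
  have hrsurj : Function.Surjective r := by
    intro j
    obtain ⟨i, hi⟩ := hcolex j
    exact ⟨i, (hruniq i j hi).symm⟩
  have hrinj : Function.Injective r := Finite.injective_iff_surjective.mpr hrsurj
  have hVz : ∀ i k, k ≠ r i → V i k = 0 := by
    intro i k hk
    by_contra h'
    exact hk (hruniq i k h')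
  have hUz : ∀ i k, k ≠ r i → U i k = 0 := fun i k hk => hsupp i k (hVz i k hk)
  -- scalar step on each row
  have hmain : ∀ i, V i (r i) = 1 ∧ U i (r i) = 1 := by
    intro i
    have hc : V.mulVec y0 i = V i (r i) * y0 (r i) := by
      simp only [Matrix.mulVec, dotProduct]
      rw [Finset.sum_eq_single (r i)]
      · intro k _ hk; rw [hVz i k hk, zero_mul]
      · simp
    have hC : ∑ k ∈ Finset.univ.erase (r i), U i k * sig (y0 k) = 0 :=
      Finset.sum_eq_zero fun k hk => by
        rw [hUz i k (Finset.ne_of_mem_erase hk), zero_mul]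
    have Hone := core_one U V y0 ε hcore i (r i)
    have Hd := key_deriv Hone
    simp only [hc, hC, add_zero] at Hone Hd
    exact scalar_step hε Hone Hd
  -- conclusion
  have hUV : U = V := by
    ext i k
    by_cases hk : k = r i
    · subst hk; rw [(hmain i).1, (hmain i).2]
    · rw [hVz i k hk, hUz i k hk]
  refine ⟨hUV, ?_, ?_, ?_⟩
  · intro i k
    by_cases hk : k = r i
    · subst hk; exact Or.inr (hmain i).2
    · exact Or.inl (hUz i k hk)
  · intro i
    refine ⟨r i, (hmain i).2, ?_⟩
    intro j hj
    by_contra hne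
    rw [hUz i j hne] at hj
    exact one_ne_zero hj.symm
  · intro j
    obtain ⟨i, hi⟩ := hrsurj j
    refine ⟨i, ?_, ?_⟩
    · rw [← hi]; exact (hmain i).2
    · intro i' hi'
      apply hrinj
      rw [hi]
      by_contra hne
      rw [hUz i' j (fun hh => hne ?_)] at hi'
      · exact one_ne_zero hi'.symm
      · rw [hh]
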